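/- If (Y, X̄, x) is a spurious 2-critical point of (BM_n) with multiplier λ ∈ ℝᵐ, then C ∈ 𝒱̲ × 𝒱̄ × {0} + image(𝒜*); explicitly: s(λ) = 0; there exists j ∈ {1,…,k} with p_j ≤ n_j and rank S_j(λ) ≤ n_j − p_j; and there is an attainable rank tuple (r_{k+1},…,r_ℓ) (namely r_j = rank X_j) with rank S_j(λ) ≤ n_j − r_j for all j > k. -/

import Mathlib

open Matrix MeasureTheory

noncomputable section

/-- The `r`-th triangular number `τ(r) = r(r+1)/2`. -/
def tau (r : ℕ) : ℕ := r * (r + 1) / 2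

/-- The space `Sⁿ` of symmetric `n × n` real matrices, as a submodule of all matrices. -/
def SymMat (n : ℕ) : Submodule ℝ (Matrix (Fin n) (Fin n) ℝ) where
  carrier := {A | A.IsSymm}
  add_mem' := fun ha hb => ha.add hb
  zero_mem' := by simp [Matrix.IsSymm]
  smul_mem' := fun c A hA => hA.smul c

instance (n : ℕ) : MeasurableSpace (Matrix (Fin n) (Fin n) ℝ) := borel _
instance (n : ℕ) : BorelSpace (Matrix (Fin n) (Fin n) ℝ) := ⟨rfl⟩
instance (n : ℕ) : MeasurableSpace (SymMat n) := borel _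
instance (n : ℕ) : BorelSpace (SymMat n) := ⟨rfl⟩

/- Block SDP setting: the PSD blocks `1, …, ℓ` are split into the `k` factored blocks,
of sizes `n₁ : Fin k → ℕ` (with factorization ranks `p : Fin k → ℕ`), and the `ℓ - k`
unfactored blocks, of sizes `n₂ : Fin l₂ → ℕ`; there is also a free variable in `ℝ^d`.
A linear map `𝒜 : E → ℝᵐ` on `E = S^{n₁} × ⋯ × S^{n_ℓ} × ℝ^d` is represented by symmetric
matrices `A i j`, `B i j` and vectors `a i`, so that the adjoint is
`𝒜*(λ) = (Σᵢ λᵢ A i ·, Σᵢ λᵢ B i ·, Σᵢ λᵢ a i)`. -/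

variable (k l₂ d m : ℕ) (n₁ : Fin k → ℕ) (n₂ : Fin l₂ → ℕ) (p : Fin k → ℕ)

/-- A point of `E`, in (matrix blocks for `j ≤ k`, matrix blocks for `j > k`, free part) form. -/
abbrev BlockPt := ((j : Fin k) → Matrix (Fin (n₁ j)) (Fin (n₁ j)) ℝ) ×
  ((j : Fin l₂) → Matrix (Fin (n₂ j)) (Fin (n₂ j)) ℝ) × (Fin d → ℝ)

/-- The value `𝒜(X)ᵢ` of the `i`-th linear constraint at a point `X ∈ E`. -/
def constrVal (A : Fin m → (j : Fin k) → Matrix (Fin (n₁ j)) (Fin (n₁ j)) ℝ)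
    (B : Fin m → (j : Fin l₂) → Matrix (Fin (n₂ j)) (Fin (n₂ j)) ℝ)
    (a : Fin m → Fin d → ℝ) (i : Fin m) (X : BlockPt k l₂ d n₁ n₂) : ℝ :=
  ∑ j, (A i j * X.1 j).trace + ∑ j, (B i j * X.2.1 j).trace + ∑ t, a i t * X.2.2 t

/-- The objective value `⟨C, X⟩` for cost data `(C₁, C₂, c)`. -/
def objVal (C₁ : (j : Fin k) → Matrix (Fin (n₁ j)) (Fin (n₁ j)) ℝ)
    (C₂ : (j : Fin l₂) → Matrix (Fin (n₂ j)) (Fin (n₂ j)) ℝ)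
    (c : Fin d → ℝ) (X : BlockPt k l₂ d n₁ n₂) : ℝ :=
  ∑ j, (C₁ j * X.1 j).trace + ∑ j, (C₂ j * X.2.1 j).trace + ∑ t, c t * X.2.2 t

/-- The feasible set of (SDP_n): all matrix blocks PSD and `𝒜(X) = b`. -/
def FeasB (A : Fin m → (j : Fin k) → Matrix (Fin (n₁ j)) (Fin (n₁ j)) ℝ)
    (B : Fin m → (j : Fin l₂) → Matrix (Fin (n₂ j)) (Fin (n₂ j)) ℝ)
    (a : Fin m → Fin d → ℝ) (b : Fin m → ℝ) : Set (BlockPt k l₂ d n₁ n₂) :=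
  {X | (∀ j, (X.1 j).PosSemidef) ∧ (∀ j, (X.2.1 j).PosSemidef) ∧
    ∀ i, constrVal k l₂ d m n₁ n₂ A B a i X = b i}

/-- The slack component `S_j(λ) = C_j - Σᵢ λᵢ A i j` for a factored block `j ≤ k`. -/
def SlackF (C₁ : (j : Fin k) → Matrix (Fin (n₁ j)) (Fin (n₁ j)) ℝ)
    (A : Fin m → (j : Fin k) → Matrix (Fin (n₁ j)) (Fin (n₁ j)) ℝ)
    (lam : Fin m → ℝ) (j : Fin k) : Matrix (Fin (n₁ j)) (Fin (n₁ j)) ℝ :=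
  C₁ j - ∑ i, lam i • A i j

/-- The slack component `S_j(λ) = C_j - Σᵢ λᵢ B i j` for an unfactored block `j > k`. -/
def SlackU (C₂ : (j : Fin l₂) → Matrix (Fin (n₂ j)) (Fin (n₂ j)) ℝ)
    (B : Fin m → (j : Fin l₂) → Matrix (Fin (n₂ j)) (Fin (n₂ j)) ℝ)
    (lam : Fin m → ℝ) (j : Fin l₂) : Matrix (Fin (n₂ j)) (Fin (n₂ j)) ℝ :=
  C₂ j - ∑ i, lam i • B i j

/-- The free slack component `s(λ) = c - Σᵢ λᵢ a i`. -/
def slackFree (c : Fin d → ℝ) (a : Fin m → Fin d → ℝ) (lam : Fin m → ℝ) : Fin d → ℝ :=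
  c - ∑ i, lam i • a i

/-- `(Y, X̄, x)` is 1st-order critical for (BM_n) with multiplier `λ`. -/
def IsCrit1B (C₁ : (j : Fin k) → Matrix (Fin (n₁ j)) (Fin (n₁ j)) ℝ)
    (C₂ : (j : Fin l₂) → Matrix (Fin (n₂ j)) (Fin (n₂ j)) ℝ) (c : Fin d → ℝ)
    (A : Fin m → (j : Fin k) → Matrix (Fin (n₁ j)) (Fin (n₁ j)) ℝ)
    (B : Fin m → (j : Fin l₂) → Matrix (Fin (n₂ j)) (Fin (n₂ j)) ℝ)
    (a : Fin m → Fin d → ℝ) (b : Fin m → ℝ)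
    (Y : (j : Fin k) → Matrix (Fin (n₁ j)) (Fin (p j)) ℝ)
    (Xbar : (j : Fin l₂) → Matrix (Fin (n₂ j)) (Fin (n₂ j)) ℝ)
    (x : Fin d → ℝ) (lam : Fin m → ℝ) : Prop :=
  (fun j => Y j * (Y j)ᵀ, Xbar, x) ∈ FeasB k l₂ d m n₁ n₂ A B a b ∧
  slackFree d m c a lam = 0 ∧
  (∀ j, SlackF k m n₁ C₁ A lam j * Y j = 0) ∧
  (∀ j, (SlackU l₂ m n₂ C₂ B lam j).PosSemidef ∧
    (SlackU l₂ m n₂ C₂ B lam j * Xbar j).trace = 0)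

/-- `(Y, X̄, x)` is 2nd-order critical for (BM_n) with multiplier `λ`. -/
def IsCrit2B (C₁ : (j : Fin k) → Matrix (Fin (n₁ j)) (Fin (n₁ j)) ℝ)
    (C₂ : (j : Fin l₂) → Matrix (Fin (n₂ j)) (Fin (n₂ j)) ℝ) (c : Fin d → ℝ)
    (A : Fin m → (j : Fin k) → Matrix (Fin (n₁ j)) (Fin (n₁ j)) ℝ)
    (B : Fin m → (j : Fin l₂) → Matrix (Fin (n₂ j)) (Fin (n₂ j)) ℝ)
    (a : Fin m → Fin d → ℝ) (b : Fin m → ℝ)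
    (Y : (j : Fin k) → Matrix (Fin (n₁ j)) (Fin (p j)) ℝ)
    (Xbar : (j : Fin l₂) → Matrix (Fin (n₂ j)) (Fin (n₂ j)) ℝ)
    (x : Fin d → ℝ) (lam : Fin m → ℝ) : Prop :=
  IsCrit1B k l₂ d m n₁ n₂ p C₁ C₂ c A B a b Y Xbar x lam ∧
  ∀ j, ∀ U : Matrix (Fin (n₁ j)) (Fin (p j)) ℝ,
    (∀ i, (A i j * (U * (Y j)ᵀ + Y j * Uᵀ)).trace = 0) →
    0 ≤ (SlackF k m n₁ C₁ A lam j * (U * Uᵀ)).trace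

/-- `X` is an optimal solution of (SDP_n). -/
def IsOptimalB (C₁ : (j : Fin k) → Matrix (Fin (n₁ j)) (Fin (n₁ j)) ℝ)
    (C₂ : (j : Fin l₂) → Matrix (Fin (n₂ j)) (Fin (n₂ j)) ℝ) (c : Fin d → ℝ)
    (A : Fin m → (j : Fin k) → Matrix (Fin (n₁ j)) (Fin (n₁ j)) ℝ)
    (B : Fin m → (j : Fin l₂) → Matrix (Fin (n₂ j)) (Fin (n₂ j)) ℝ)
    (a : Fin m → Fin d → ℝ) (b : Fin m → ℝ)
    (X : BlockPt k l₂ d n₁ n₂) : Prop :=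
  X ∈ FeasB k l₂ d m n₁ n₂ A B a b ∧
  ∀ X' ∈ FeasB k l₂ d m n₁ n₂ A B a b,
    objVal k l₂ d n₁ n₂ C₁ C₂ c X ≤ objVal k l₂ d n₁ n₂ C₁ C₂ c X'

/-- A rank tuple `r` for the unfactored blocks is attainable if some feasible point of
(SDP_n) has `rank X_j = r j` for all unfactored blocks `j`. -/
def AttainableRanks (A : Fin m → (j : Fin k) → Matrix (Fin (n₁ j)) (Fin (n₁ j)) ℝ)
    (B : Fin m → (j : Fin l₂) → Matrix (Fin (n₂ j)) (Fin (n₂ j)) ℝ)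
    (a : Fin m → Fin d → ℝ) (b : Fin m → ℝ) (r : Fin l₂ → ℕ) : Prop :=
  ∃ X ∈ FeasB k l₂ d m n₁ n₂ A B a b, ∀ j, (X.2.1 j).rank = r j

/-!
For any multiplier `λ` and feasible `X`, the objective splits as `⟨C, X⟩ = ⟨λ, b⟩ + ⟨S(λ), X⟩`.
So if every block of `S(λ)` is positive semidefinite and `s(λ) = 0`, then `⟨S(λ), ·⟩ ≥ 0` on the
feasible set while complementary slackness makes it vanish at the critical point, which is then
optimal. The unfactored slack blocks are PSD by first-order criticality. If a factor `Y_j` has a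
kernel vector `z ≠ 0`, the directions `U = u zᵀ` satisfy `U Y_jᵀ = 0`, so they leave `𝒜` unchanged,
and second-order criticality gives `‖z‖² uᵀ S_j(λ) u ≥ 0` for all `u`. Hence at a spurious point
some `Y_j` has full column rank `p_j ≤ n_j`, and `S_j(λ) Y_j = 0` gives
`rank S_j(λ) ≤ n_j - p_j`. On an unfactored block, `tr(S_j X_j) = 0` for PSD `S_j`, `X_j` forces
`S_j X_j = 0`, whence `rank S_j(λ) ≤ n_j - rank X_j`.
-/

open scoped ComplexOrder

lemma Matrix.trace_conjTranspose_mul_self_mul_conjTranspose_mul_self {n 𝕜 : Type*} [Fintype n]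
    [RCLike 𝕜] (R Q : Matrix n n 𝕜) :
    (Rᴴ * R * (Qᴴ * Q)).trace = ((Q * Rᴴ)ᴴ * (Q * Rᴴ)).trace := by
  rw [conjTranspose_mul, conjTranspose_conjTranspose, Matrix.mul_assoc, trace_mul_comm]
  simp only [Matrix.mul_assoc]

namespace Matrix.PosSemidef

variable {n 𝕜 : Type*} [Fintype n] [RCLike 𝕜] {S X : Matrix n n 𝕜}

open scoped MatrixOrder in
lemma exists_eq_conjTranspose_mul_self (hS : S.PosSemidef) :
    ∃ R : Matrix n n 𝕜, S = Rᴴ * R := by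
  classical
  obtain ⟨R, rfl⟩ := CStarAlgebra.nonneg_iff_eq_star_mul_self.mp hS.nonneg
  exact ⟨R, rfl⟩

lemma trace_mul_nonneg (hS : S.PosSemidef) (hX : X.PosSemidef) : 0 ≤ (S * X).trace := by
  obtain ⟨R, rfl⟩ := hS.exists_eq_conjTranspose_mul_self
  obtain ⟨Q, rfl⟩ := hX.exists_eq_conjTranspose_mul_self
  rw [trace_conjTranspose_mul_self_mul_conjTranspose_mul_self]
  exact (posSemidef_conjTranspose_mul_self _).trace_nonneg

lemma mul_eq_zero_of_trace_mul_eq_zero (hS : S.PosSemidef) (hX : X.PosSemidef)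
    (h : (S * X).trace = 0) : S * X = 0 := by
  obtain ⟨R, rfl⟩ := hS.exists_eq_conjTranspose_mul_self
  obtain ⟨Q, rfl⟩ := hX.exists_eq_conjTranspose_mul_self
  rw [trace_conjTranspose_mul_self_mul_conjTranspose_mul_self,
    trace_conjTranspose_mul_self_eq_zero_iff] at h
  have hRQ : R * Qᴴ = 0 := by simpa using congrArg (·ᴴ) h
  rw [Matrix.mul_assoc, ← Matrix.mul_assoc R, hRQ, Matrix.zero_mul, Matrix.mul_zero]

end Matrix.PosSemidef

lemma Matrix.rank_eq_card_width_of_mulVec_injective {m n K : Type*} [Fintype m] [Fintype n]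
    [Field K] {Y : Matrix m n K} (h : Function.Injective Y.mulVec) :
    Y.rank = Fintype.card n := by
  rw [Matrix.rank, LinearMap.finrank_range_of_inj h, Module.finrank_fintype_fun_eq_card]

lemma Matrix.IsSymm.posSemidef_of_trace_mul_mul_transpose_nonneg {n p : Type*} [Fintype n]
    [Fintype p] {S : Matrix n n ℝ} (hS : S.IsSymm) {Y : Matrix n p ℝ} {z : p → ℝ}
    (hz : z ≠ 0) (hYz : Y *ᵥ z = 0)
    (h : ∀ U : Matrix n p ℝ, U * Yᵀ = 0 → 0 ≤ (S * (U * Uᵀ)).trace) : S.PosSemidef := by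
  refine .of_dotProduct_mulVec_nonneg (isHermitian_iff_isSymm.mpr hS) fun u => ?_
  have hzz : 0 < z ⬝ᵥ z := lt_of_le_of_ne (by simpa using dotProduct_star_self_nonneg z)
    (Ne.symm (dotProduct_self_eq_zero.not.mpr hz))
  have hU := h (vecMulVec u z) (by rw [vecMulVec_mul, vecMul_transpose, hYz, vecMulVec_zero])
  rw [transpose_vecMulVec, vecMulVec_mul_vecMulVec, mul_vecMulVec, trace_vecMulVec,
    dotProduct_smul, smul_eq_mul] at hU
  rw [star_trivial, dotProduct_comm]
  exact nonneg_of_mul_nonneg_right hU hzz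

section BurerMonteiro

variable {k l₂ d m n₁ n₂ p} {C₁ : (j : Fin k) → Matrix (Fin (n₁ j)) (Fin (n₁ j)) ℝ}
  {C₂ : (j : Fin l₂) → Matrix (Fin (n₂ j)) (Fin (n₂ j)) ℝ} {c : Fin d → ℝ}
  {A : Fin m → (j : Fin k) → Matrix (Fin (n₁ j)) (Fin (n₁ j)) ℝ}
  {B : Fin m → (j : Fin l₂) → Matrix (Fin (n₂ j)) (Fin (n₂ j)) ℝ}
  {a : Fin m → Fin d → ℝ} {b : Fin m → ℝ}

lemma slackF_isSymm (hC₁ : ∀ j, (C₁ j).IsSymm) (hA : ∀ i j, (A i j).IsSymm)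
    (lam : Fin m → ℝ) (j : Fin k) : (SlackF k m n₁ C₁ A lam j).IsSymm :=
  (hC₁ j).sub <| Submodule.sum_mem (SymMat (n₁ j)) fun i _ => Submodule.smul_mem _ (lam i) (hA i j)

lemma objVal_eq_sum_constrVal_add_objVal_slack (lam : Fin m → ℝ) (X : BlockPt k l₂ d n₁ n₂) :
    objVal k l₂ d n₁ n₂ C₁ C₂ c X =
      ∑ i, lam i * constrVal k l₂ d m n₁ n₂ A B a i X +
        objVal k l₂ d n₁ n₂ (SlackF k m n₁ C₁ A lam) (SlackU l₂ m n₂ C₂ B lam)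
          (slackFree d m c a lam) X := by
  simp only [objVal, constrVal, SlackF, SlackU, slackFree, Matrix.smul_mul,
    trace_sub, trace_sum, trace_smul, Pi.sub_apply, Finset.sum_apply,
    Pi.smul_apply, smul_eq_mul, sub_mul, Finset.sum_mul, Finset.sum_sub_distrib, mul_add,
    Finset.mul_sum, Finset.sum_add_distrib, mul_assoc]
  simp only [Finset.sum_comm (s := Finset.univ (α := Fin m))]
  ring

lemma objVal_nonneg (hC₁ : ∀ j, (C₁ j).PosSemidef) (hC₂ : ∀ j, (C₂ j).PosSemidef)
    {X : BlockPt k l₂ d n₁ n₂} (hX₁ : ∀ j, (X.1 j).PosSemidef) (hX₂ : ∀ j, (X.2.1 j).PosSemidef) :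
    0 ≤ objVal k l₂ d n₁ n₂ C₁ C₂ 0 X := by
  simp only [objVal, Pi.zero_apply, zero_mul, Finset.sum_const_zero, add_zero]
  exact add_nonneg (Finset.sum_nonneg fun j _ => (hC₁ j).trace_mul_nonneg (hX₁ j))
    (Finset.sum_nonneg fun j _ => (hC₂ j).trace_mul_nonneg (hX₂ j))

lemma isOptimalB_of_complementary_slackness (lam : Fin m → ℝ) {X : BlockPt k l₂ d n₁ n₂}
    (hX : X ∈ FeasB k l₂ d m n₁ n₂ A B a b) (hs : slackFree d m c a lam = 0)
    (hSF : ∀ j, (SlackF k m n₁ C₁ A lam j).PosSemidef)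
    (hSU : ∀ j, (SlackU l₂ m n₂ C₂ B lam j).PosSemidef)
    (hcompl : objVal k l₂ d n₁ n₂ (SlackF k m n₁ C₁ A lam) (SlackU l₂ m n₂ C₂ B lam)
      (slackFree d m c a lam) X = 0) :
    IsOptimalB k l₂ d m n₁ n₂ C₁ C₂ c A B a b X := by
  refine ⟨hX, fun X' hX' => ?_⟩
  have hconstr : ∀ i, constrVal k l₂ d m n₁ n₂ A B a i X = constrVal k l₂ d m n₁ n₂ A B a i X' :=
    fun i => (hX.2.2 i).trans (hX'.2.2 i).symm
  rw [objVal_eq_sum_constrVal_add_objVal_slack (A := A) (B := B) (a := a) lam X,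
    objVal_eq_sum_constrVal_add_objVal_slack (A := A) (B := B) (a := a) lam X', hcompl]
  simp only [hconstr, add_zero, le_add_iff_nonneg_right]
  exact hs ▸ objVal_nonneg hSF hSU hX'.1 hX'.2.1

lemma objVal_slack_eq_zero_of_isCrit1B {Y : (j : Fin k) → Matrix (Fin (n₁ j)) (Fin (p j)) ℝ}
    {Xbar : (j : Fin l₂) → Matrix (Fin (n₂ j)) (Fin (n₂ j)) ℝ} {x : Fin d → ℝ} {lam : Fin m → ℝ}
    (hcrit : IsCrit1B k l₂ d m n₁ n₂ p C₁ C₂ c A B a b Y Xbar x lam) :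
    objVal k l₂ d n₁ n₂ (SlackF k m n₁ C₁ A lam) (SlackU l₂ m n₂ C₂ B lam)
      (slackFree d m c a lam) (fun j => Y j * (Y j)ᵀ, Xbar, x) = 0 := by
  obtain ⟨-, hs, hSY, hSU⟩ := hcrit
  simp only [objVal, hs, ← Matrix.mul_assoc, hSY, fun j => (hSU j).2, Matrix.zero_mul, trace_zero,
    Pi.zero_apply, zero_mul, Finset.sum_const_zero, add_zero]

lemma slackF_posSemidef_of_isCrit2B (hC₁ : ∀ j, (C₁ j).IsSymm) (hA : ∀ i j, (A i j).IsSymm)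
    {Y : (j : Fin k) → Matrix (Fin (n₁ j)) (Fin (p j)) ℝ}
    {Xbar : (j : Fin l₂) → Matrix (Fin (n₂ j)) (Fin (n₂ j)) ℝ} {x : Fin d → ℝ} {lam : Fin m → ℝ}
    (hcrit : IsCrit2B k l₂ d m n₁ n₂ p C₁ C₂ c A B a b Y Xbar x lam) {j : Fin k}
    (hj : ¬ Function.Injective (Y j).mulVec) : (SlackF k m n₁ C₁ A lam j).PosSemidef := by
  obtain ⟨z, hYz, hz⟩ : ∃ z, (Y j) *ᵥ z = 0 ∧ z ≠ 0 := by
    by_contra! h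
    exact hj ((injective_iff_map_eq_zero (Y j).mulVecLin).mpr h)
  refine (slackF_isSymm hC₁ hA lam j).posSemidef_of_trace_mul_mul_transpose_nonneg hz hYz
    fun U hU => hcrit.2 j U fun i => ?_
  rw [← transpose_transpose (Y j * Uᵀ), transpose_mul, transpose_transpose, hU]
  simp

lemma exists_mulVec_injective_of_not_isOptimalB (hC₁ : ∀ j, (C₁ j).IsSymm)
    (hA : ∀ i j, (A i j).IsSymm)
    {Y : (j : Fin k) → Matrix (Fin (n₁ j)) (Fin (p j)) ℝ}
    {Xbar : (j : Fin l₂) → Matrix (Fin (n₂ j)) (Fin (n₂ j)) ℝ} {x : Fin d → ℝ} {lam : Fin m → ℝ}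
    (hcrit : IsCrit2B k l₂ d m n₁ n₂ p C₁ C₂ c A B a b Y Xbar x lam)
    (hspur : ¬ IsOptimalB k l₂ d m n₁ n₂ C₁ C₂ c A B a b (fun j => Y j * (Y j)ᵀ, Xbar, x)) :
    ∃ j, Function.Injective (Y j).mulVec := by
  by_contra! hY
  exact hspur <| isOptimalB_of_complementary_slackness lam hcrit.1.1 hcrit.1.2.1
    (fun j => slackF_posSemidef_of_isCrit2B hC₁ hA hcrit (hY j)) (fun j => (hcrit.1.2.2.2 j).1)
    (objVal_slack_eq_zero_of_isCrit1B hcrit.1)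

end BurerMonteiro

theorem block_spurious_implies_cost_in_bad_set_general
    (k l₂ d m : ℕ) (n₁ : Fin k → ℕ) (n₂ : Fin l₂ → ℕ) (p : Fin k → ℕ)
    (C₁ : (j : Fin k) → Matrix (Fin (n₁ j)) (Fin (n₁ j)) ℝ)
    (C₂ : (j : Fin l₂) → Matrix (Fin (n₂ j)) (Fin (n₂ j)) ℝ) (c : Fin d → ℝ)
    (hC₁ : ∀ j, (C₁ j).IsSymm)
    (A : Fin m → (j : Fin k) → Matrix (Fin (n₁ j)) (Fin (n₁ j)) ℝ)
    (B : Fin m → (j : Fin l₂) → Matrix (Fin (n₂ j)) (Fin (n₂ j)) ℝ)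
    (a : Fin m → Fin d → ℝ) (b : Fin m → ℝ)
    (hA : ∀ i j, (A i j).IsSymm)
    (Y : (j : Fin k) → Matrix (Fin (n₁ j)) (Fin (p j)) ℝ)
    (Xbar : (j : Fin l₂) → Matrix (Fin (n₂ j)) (Fin (n₂ j)) ℝ)
    (x : Fin d → ℝ) (lam : Fin m → ℝ)
    (hcrit : IsCrit2B k l₂ d m n₁ n₂ p C₁ C₂ c A B a b Y Xbar x lam)
    (hspur : ¬ IsOptimalB k l₂ d m n₁ n₂ C₁ C₂ c A B a b (fun j => Y j * (Y j)ᵀ, Xbar, x)) :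
    slackFree d m c a lam = 0 ∧
    (∃ j : Fin k, p j ≤ n₁ j ∧
      ((SlackF k m n₁ C₁ A lam j).rank : ℤ) ≤ (n₁ j : ℤ) - (p j : ℤ)) ∧
    AttainableRanks k l₂ d m n₁ n₂ A B a b (fun j => (Xbar j).rank) ∧
    ∀ j : Fin l₂,
      ((SlackU l₂ m n₂ C₂ B lam j).rank : ℤ) ≤ (n₂ j : ℤ) - ((Xbar j).rank : ℤ) := by
  obtain ⟨j, hj⟩ := exists_mulVec_injective_of_not_isOptimalB hC₁ hA hcrit hspur
  obtain ⟨⟨hfeas, hs, hSY, hSU⟩, -⟩ := hcrit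
  have hrankY : (Y j).rank = p j := by
    simpa using rank_eq_card_width_of_mulVec_injective hj
  refine ⟨hs, ⟨j, ?_, ?_⟩, ⟨_, hfeas, fun _ => rfl⟩, fun j => ?_⟩
  · simpa [hrankY] using (Y j).rank_le_card_height
  · have hrank := rank_add_rank_le_card_of_mul_eq_zero (hSY j)
    simp only [hrankY, Fintype.card_fin] at hrank
    omega
  · have hrank := rank_add_rank_le_card_of_mul_eq_zero <|
      (hSU j).1.mul_eq_zero_of_trace_mul_eq_zero (hfeas.2.1 j) (hSU j).2
    simp only [Fintype.card_fin] at hrank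
    omega

/-- If `(Y, X̄, x)` is a spurious 2-critical point of (BM_n) with
multiplier `λ`, then `C ∈ 𝒱̲ × 𝒱̄ × {0} + image 𝒜*`: `s(λ) = 0`; some factored block `j`
has `p_j ≤ n_j` and `rank S_j(λ) ≤ n_j - p_j`; and the rank tuple `r_j = rank X_j` of the
unfactored blocks is attainable with `rank S_j(λ) ≤ n_j - r_j` for all `j > k`. -/
theorem block_spurious_implies_cost_in_bad_set
    (k l₂ d m : ℕ) (n₁ : Fin k → ℕ) (n₂ : Fin l₂ → ℕ) (p : Fin k → ℕ)
    (C₁ : (j : Fin k) → Matrix (Fin (n₁ j)) (Fin (n₁ j)) ℝ)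
    (C₂ : (j : Fin l₂) → Matrix (Fin (n₂ j)) (Fin (n₂ j)) ℝ) (c : Fin d → ℝ)
    (hC₁ : ∀ j, (C₁ j).IsSymm) (hC₂ : ∀ j, (C₂ j).IsSymm)
    (A : Fin m → (j : Fin k) → Matrix (Fin (n₁ j)) (Fin (n₁ j)) ℝ)
    (B : Fin m → (j : Fin l₂) → Matrix (Fin (n₂ j)) (Fin (n₂ j)) ℝ)
    (a : Fin m → Fin d → ℝ) (b : Fin m → ℝ)
    (hA : ∀ i j, (A i j).IsSymm) (hB : ∀ i j, (B i j).IsSymm)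
    (Y : (j : Fin k) → Matrix (Fin (n₁ j)) (Fin (p j)) ℝ)
    (Xbar : (j : Fin l₂) → Matrix (Fin (n₂ j)) (Fin (n₂ j)) ℝ)
    (x : Fin d → ℝ) (lam : Fin m → ℝ)
    (hcrit : IsCrit2B k l₂ d m n₁ n₂ p C₁ C₂ c A B a b Y Xbar x lam)
    (hspur : ¬ IsOptimalB k l₂ d m n₁ n₂ C₁ C₂ c A B a b (fun j => Y j * (Y j)ᵀ, Xbar, x)) :
    slackFree d m c a lam = 0 ∧
    (∃ j : Fin k, p j ≤ n₁ j ∧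
      ((SlackF k m n₁ C₁ A lam j).rank : ℤ) ≤ (n₁ j : ℤ) - (p j : ℤ)) ∧
    AttainableRanks k l₂ d m n₁ n₂ A B a b (fun j => (Xbar j).rank) ∧
    ∀ j : Fin l₂,
      ((SlackU l₂ m n₂ C₂ B lam j).rank : ℤ) ≤ (n₂ j : ℤ) - ((Xbar j).rank : ℤ) :=
  block_spurious_implies_cost_in_bad_set_general k l₂ d m n₁ n₂ p C₁ C₂ c hC₁ A B a b hA Y Xbar x
    lam hcrit hspur
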